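/- arXiv:1103.3838 — 4 statements merged into one kernel-verified Lean document; each statement's English description precedes it below -/
import Mathlib

section
/- Let (M, μ) be a finite measure space with μ(M) = V > 0, and let f : M → ℝ be strictly positive and measurable with f and 1/f integrable. Suppose φ : M → ℝ is integrable, satisfies the pointwise identity (φ·f − 3r)/f = −2s with r = (1/V)∫ φ f dμ and s = (∫ φ f dμ)/(∫ f dμ), and satisfies φ f ≤ (1/3) f² pointwise. Then V·∫ φ f dμ ≤ (1/3)(∫ f dμ)². Equivalently: if g = σ₂/σ₁ with σ₂ = φ f, the functional E = V·∫σ₂ dμ/(∫σ₁ dμ)² satisfies E ≤ 1/3. -/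
open MeasureTheory

/-- Abstract version of Lemma 2: if `f > 0` plays the role of σ₁ and `φ = σ₂/σ₁`
satisfies the Newton inequality `φ·f ≤ (1/3)f²` and the critical point equation
`(φ·f − 3r)/f = −2s` with `r = (1/V)∫φf` and `s = (∫φf)/(∫f)`, then
`V·∫φf ≤ (1/3)(∫f)²`, i.e. the energy `E = V·∫σ₂/(∫σ₁)²` satisfies `E ≤ 1/3`. -/
theorem stmt_5 {M : Type*} [MeasurableSpace M] (μ : Measure M) [IsFiniteMeasure μ]
    (V : ℝ) (hV : V = (μ Set.univ).toReal) (hVpos : 0 < V)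
    (f φ : M → ℝ) (hfpos : ∀ x, 0 < f x) (hfmeas : Measurable f)
    (hf : Integrable f μ) (hf' : Integrable (fun x => 1 / f x) μ)
    (hφ : Integrable φ μ) (hφf : Integrable (fun x => φ x * f x) μ)
    (r s : ℝ) (hr : r = (∫ x, φ x * f x ∂μ) / V)
    (hs : s = (∫ x, φ x * f x ∂μ) / (∫ x, f x ∂μ))
    (hNewton : ∀ x, φ x * f x ≤ (1 / 3) * f x ^ 2)
    (heq : ∀ x, (φ x * f x - 3 * r) / f x = -2 * s) :
    V * (∫ x, φ x * f x ∂μ) ≤ (1 / 3) * (∫ x, f x ∂μ) ^ 2 := by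
  set I := ∫ x, φ x * f x ∂μ with hI
  set F := ∫ x, f x ∂μ with hFdef
  set J := ∫ x, 1 / f x ∂μ with hJdef
  have hμ : μ Set.univ ≠ 0 := by
    intro h
    rw [hV, h] at hVpos
    simp at hVpos
  have hF : 0 < F := by
    rw [hFdef]
    rw [integral_pos_iff_support_of_nonneg (fun x => (hfpos x).le) hf]
    have : Function.support f = Set.univ := by
      ext x; simp [Function.support, (hfpos x).ne']
    rw [this]
    exact lt_of_le_of_ne zero_le (Ne.symm hμ)
  -- Cauchy–Schwarz type bound: J ≥ V² / F
  have hJ : V ^ 2 / F ≤ J := by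
    set a : ℝ := F / V with ha_def
    have ha : 0 < a := div_pos hF hVpos
    have key : ∀ x, (2 : ℝ) ≤ f x / a + a / f x := by
      intro x
      have hfx := hfpos x
      rw [div_add_div _ _ ha.ne' hfx.ne', le_div_iff₀ (by positivity)]
      nlinarith [sq_nonneg (f x - a)]
    have hint2 : Integrable (fun x => a / f x) μ := by
      simpa only [mul_one_div] using hf'.const_mul a
    have hint1 : Integrable (fun x => f x / a) μ := hf.div_const a
    have hmono : ∫ (_ : M), (2 : ℝ) ∂μ ≤ ∫ x, (f x / a + a / f x) ∂μ :=
      integral_mono (integrable_const 2) (hint1.add hint2) key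
    have hL : ∫ (_ : M), (2 : ℝ) ∂μ = 2 * V := by
      rw [integral_const, smul_eq_mul, hV, measureReal_def]; ring
    have hR : ∫ x, (f x / a + a / f x) ∂μ = F / a + a * J := by
      rw [integral_add hint1 hint2, integral_div]
      congr 1
      simp only [div_eq_mul_one_div a]
      rw [integral_const_mul]
    rw [hL, hR] at hmono
    have hFa : F / a = V := by
      rw [ha_def]; field_simp
    rw [hFa] at hmono
    -- 2V ≤ V + a J ⇒ V ≤ a J ⇒ V²/F ≤ J
    rw [div_le_iff₀ hF]
    have : V ≤ a * J := by linarith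
    calc V ^ 2 = V * V := sq V
    _ ≤ (a * J) * V := by nlinarith
    _ = J * F := by rw [ha_def]; field_simp
  by_cases hIpos : I ≤ 0
  · nlinarith
  push_neg at hIpos
  have hrpos : 0 < r := by rw [hr]; positivity
  -- pointwise: 3r/f − 2s ≤ f/3
  have hpt : ∀ x, 3 * r * (1 / f x) - 2 * s ≤ f x / 3 := by
    intro x
    have hfx := hfpos x
    have he := heq x
    have hN := hNewton x
    have he' : φ x * f x = 3 * r - 2 * s * f x := by
      field_simp at he
      linarith
    rw [sub_le_iff_le_add, mul_one_div, div_le_iff₀ hfx]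
    nlinarith
  have hintL : Integrable (fun x => 3 * r * (1 / f x) - 2 * s) μ :=
    (hf'.const_mul (3 * r)).sub (integrable_const (2 * s))
  have hmain : 3 * r * J - 2 * s * V ≤ F / 3 := by
    have := integral_mono hintL (hf.div_const 3) hpt
    rw [integral_div] at this
    have hL : ∫ x, (3 * r * (1 / f x) - 2 * s) ∂μ = 3 * r * J - 2 * s * V := by
      rw [integral_sub (hf'.const_mul (3 * r)) (integrable_const (2 * s)),
        integral_const_mul, integral_const, smul_eq_mul, hV, measureReal_def]
      ring
    rw [hL] at this
    exact this
  have hstep : 3 * r * (V ^ 2 / F) - 2 * s * V ≤ F / 3 := by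
    nlinarith [mul_le_mul_of_nonneg_left hJ (by positivity : (0:ℝ) ≤ 3 * r)]
  rw [hr, hs] at hstep
  have h2 : 3 * (I / V) * (V ^ 2 / F) - 2 * (I / F) * V = V * I / F := by
    field_simp; ring
  rw [h2, div_le_div_iff₀ hF (by norm_num : (0:ℝ) < 3)] at hstep
  nlinarith [hstep]
end

section
/- For an n×n real symmetric matrix W with σ₁(W) = tr(W) > 0, and any real symmetric matrix R, the second derivative of the map W ↦ σ₂(W)/σ₁(W) in direction R equals −(Σᵢⱼ (σ₁(W)·Rᵢⱼ − σ₁(R)·Wᵢⱼ)²)/σ₁(W)³. In particular, W ↦ σ₂(W)/σ₁(W) is concave on the cone {W : tr W > 0}. -/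
open Matrix

/-- σ₂ of a matrix: σ₂(W) = ((tr W)² − tr(W²))/2. -/
noncomputable def sigma2 {n : ℕ} (W : Matrix (Fin n) (Fin n) ℝ) : ℝ :=
  (W.trace ^ 2 - (W * W).trace) / 2

/-- trace of product expressed as entrywise sum, for symmetric second factor. -/
lemma trace_mul_symm {n : ℕ} (A B : Matrix (Fin n) (Fin n) ℝ) (hB : B.IsSymm) :
    (A * B).trace = ∑ i, ∑ j, A i j * B i j := by
  simp only [Matrix.trace, Matrix.diag, Matrix.mul_apply]
  exact Finset.sum_congr rfl fun i _ => Finset.sum_congr rfl fun j _ => by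
    rw [(hB.apply j i)]

lemma trq {n : ℕ} (A : Matrix (Fin n) (Fin n) ℝ) (hA : A.IsSymm) :
    (A * A).trace = ∑ i, ∑ j, A i j ^ 2 := by
  rw [trace_mul_symm A A hA]
  exact Finset.sum_congr rfl fun i _ => Finset.sum_congr rfl fun j _ => (sq (A i j)).symm

/-- Second derivative at 0 of a quadratic over linear rational function. -/
lemma key_deriv (a b c p q : ℝ) (hp : p ≠ 0) :
    iteratedDeriv 2 (fun t : ℝ => (a + b*t + c*t^2)/(p + q*t)) 0
      = (2*c*p^2 - 2*b*p*q + 2*a*q^2)/p^3 := by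
  set f : ℝ → ℝ := fun t => (a + b*t + c*t^2)/(p + q*t) with hf
  set g : ℝ → ℝ := fun t => ((b + 2*c*t)*(p + q*t) - (a + b*t + c*t^2)*q)/(p + q*t)^2 with hg
  have hN : ∀ t : ℝ, HasDerivAt (fun t : ℝ => a + b*t + c*t^2) (b + 2*c*t) t := by
    intro t
    have h1 : HasDerivAt (fun t : ℝ => a + b*t + c*t^2)
        (0 + b*1 + c*(↑2 * t^(2-1))) t :=
      ((hasDerivAt_const t a).add ((hasDerivAt_id t).const_mul b)).add
        ((hasDerivAt_pow 2 t).const_mul c)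
    convert h1 using 1; push_cast; ring
  have hD : ∀ t : ℝ, HasDerivAt (fun t : ℝ => p + q*t) q t := by
    intro t
    have h1 : HasDerivAt (fun t : ℝ => p + q*t) (0 + q*1) t :=
      (hasDerivAt_const t p).add ((hasDerivAt_id t).const_mul q)
    convert h1 using 1; ring
  have hfg : ∀ t : ℝ, p + q*t ≠ 0 → HasDerivAt f (g t) t := by
    intro t ht
    have := (hN t).div (hD t) ht
    exact this
  have hU : IsOpen {t : ℝ | p + q*t ≠ 0} := by
    have : Continuous fun t : ℝ => p + q*t := by continuity
    exact isOpen_ne.preimage this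
  have h0 : (0:ℝ) ∈ {t : ℝ | p + q*t ≠ 0} := by simpa using hp
  have hEv : deriv f =ᶠ[nhds (0:ℝ)] g := by
    filter_upwards [hU.mem_nhds h0] with t ht
    exact (hfg t ht).deriv
  have h2 : iteratedDeriv 2 f 0 = deriv (deriv f) 0 := by
    rw [iteratedDeriv_succ, iteratedDeriv_one]
  rw [h2, hEv.deriv_eq]
  have hNum : HasDerivAt (fun t : ℝ => (b + 2*c*t)*(p + q*t) - (a + b*t + c*t^2)*q)
      (2*c*p + b*q - (b*q)) 0 := by
    have h1 : HasDerivAt (fun t : ℝ => b + 2*c*t) (2*c) 0 := by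
      have := (hasDerivAt_const (0:ℝ) b).add ((hasDerivAt_id (0:ℝ)).const_mul (2*c))
      exact this.congr_deriv (by ring)
    have h2 := (h1.mul (hD 0)).sub ((hN 0).mul_const q)
    exact h2.congr_deriv (by ring)
  have hDen : HasDerivAt (fun t : ℝ => (p + q*t)^2) (2*p*q) 0 := by
    have := (hD 0).pow 2
    exact this.congr_deriv (by push_cast; ring)
  have hder := (hNum.div hDen (by simpa using pow_ne_zero 2 hp)).deriv
  rw [show deriv g 0 = _ from hder]
  simp only [mul_zero, add_zero]
  field_simp
  ring

lemma final_ineq (s t qA qB qC a b : ℝ) (hs0 : 0<s) (ht0 : 0<t)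
    (hst0 : 0 < a*s+b*t)
    (hsum : qC*(s*t) ≤ (a*s+b*t)*(a*t*qA+b*s*qB)) :
    a*((s^2-qA)/2/s) + b*((t^2-qB)/2/t) ≤ ((a*s+b*t)^2-qC)/2/(a*s+b*t) := by
  rw [div_div, div_div, div_div, ← mul_div_assoc, ← mul_div_assoc,
    div_add_div _ _ (by positivity : (2*s:ℝ) ≠ 0) (by positivity : (2*t:ℝ) ≠ 0),
    div_le_div_iff₀ (by positivity) (by positivity)]
  nlinarith [hsum, mul_pos hs0 ht0, hst0]

/-- The second derivative of W ↦ σ₂(W)/σ₁(W) in a symmetric direction R equals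
−(Σᵢⱼ (σ₁(W)Rᵢⱼ − σ₁(R)Wᵢⱼ)²)/σ₁(W)³; in particular σ₂/σ₁ is concave on the cone
of symmetric matrices of positive trace. -/
theorem stmt_7 {n : ℕ} (W R : Matrix (Fin n) (Fin n) ℝ)
    (hW : W.IsSymm) (hR : R.IsSymm) (htr : 0 < W.trace) :
    iteratedDeriv 2 (fun t : ℝ => sigma2 (W + t • R) / (W + t • R).trace) 0 =
        -(∑ i, ∑ j, (W.trace * R i j - R.trace * W i j) ^ 2) / W.trace ^ 3 ∧
      ConcaveOn ℝ {A : Matrix (Fin n) (Fin n) ℝ | A.IsSymm ∧ 0 < A.trace}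
        (fun A => sigma2 A / A.trace) := by
  set p := W.trace with hp
  set q := R.trace with hq
  set w2 := (W * W).trace with hw2
  set r2 := (R * R).trace with hr2
  set wr := (W * R).trace with hwr
  have hp0 : p ≠ 0 := ne_of_gt htr
  constructor
  · -- derivative part
    have hfun : (fun t : ℝ => sigma2 (W + t • R) / (W + t • R).trace)
        = fun t : ℝ => ((p^2 - w2)/2 + (p*q - wr)*t + ((q^2 - r2)/2)*t^2)/(p + q*t) := by
      funext t
      have htr' : (W + t • R).trace = p + q*t := by
        rw [trace_add, trace_smul]; simp [smul_eq_mul]; ring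
      have hsq : ((W + t • R) * (W + t • R)).trace = w2 + 2*t*wr + t^2*r2 := by
        simp only [add_mul, mul_add, trace_add, Matrix.smul_mul, Matrix.mul_smul,
          trace_smul, smul_smul, smul_eq_mul, Matrix.trace_mul_comm R W]
        ring
      rw [sigma2, htr', hsq]
      congr 1
      ring
    rw [hfun, key_deriv _ _ _ _ _ hp0]
    have hsum : (∑ i, ∑ j, (p * R i j - q * W i j) ^ 2)
        = p^2*r2 - 2*p*q*wr + q^2*w2 := by
      have e1 : r2 = ∑ i, ∑ j, R i j ^ 2 := trq R hR
      have e2 : w2 = ∑ i, ∑ j, W i j ^ 2 := trq W hW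
      have e3 : wr = ∑ i, ∑ j, W i j * R i j := trace_mul_symm W R hR
      rw [e1, e2, e3]
      simp only [Finset.mul_sum]
      rw [← Finset.sum_sub_distrib, ← Finset.sum_add_distrib]
      refine Finset.sum_congr rfl fun i _ => ?_
      rw [← Finset.sum_sub_distrib, ← Finset.sum_add_distrib]
      exact Finset.sum_congr rfl fun j _ => by ring
    rw [hsum]
    field_simp
    ring
  · -- concavity part
    set S := {A : Matrix (Fin n) (Fin n) ℝ | A.IsSymm ∧ 0 < A.trace} with hS
    have hconv : Convex ℝ S := by
      intro A hA B hB a b ha hb hab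
      refine ⟨(hA.1.smul a).add (hB.1.smul b), ?_⟩
      rw [trace_add, trace_smul, trace_smul]
      rcases eq_or_lt_of_le ha with h | h
      · have hb1 : b = 1 := by linarith
        simp [← h, hb1, hB.2]
      · have h1 : (0:ℝ) ≤ b • B.trace := smul_nonneg hb hB.2.le
        have h2 : 0 < a • A.trace := by simpa [smul_eq_mul] using mul_pos h hA.2
        linarith
    refine ⟨hconv, ?_⟩
    intro A hA B hB a b ha hb hab
    set s := A.trace with hs
    set t := B.trace with ht
    have hs0 : 0 < s := hA.2
    have ht0 : 0 < t := hB.2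
    have hC : (a • A + b • B).trace = a*s + b*t := by
      rw [trace_add, trace_smul, trace_smul]; simp [smul_eq_mul]; rfl
    have hst0 : 0 < a*s + b*t := by
      rcases eq_or_lt_of_le ha with h | h
      · have hb1 : b = 1 := by linarith
        simp [← h, hb1, ht0]
      · nlinarith [mul_nonneg hb ht0.le]
    set qA := ∑ i, ∑ j, A i j ^ 2 with hqA
    set qB := ∑ i, ∑ j, B i j ^ 2 with hqB
    set qC := ∑ i, ∑ j, (a * A i j + b * B i j) ^ 2 with hqC
    have hsum : qC * (s*t) ≤ (a*s+b*t) * (a*t*qA + b*s*qB) := by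
      have keyp : ∀ x y : ℝ, (a*x+b*y)^2 * (s*t) ≤ (a*s+b*t)*(a*t*x^2 + b*s*y^2) := by
        intro x y
        nlinarith [mul_nonneg (mul_nonneg ha hb) (sq_nonneg (x*t - y*s)), hs0, ht0,
          mul_pos hs0 ht0]
      calc qC * (s*t) = ∑ i, ∑ j, (a * A i j + b * B i j)^2 * (s*t) := by
              rw [Finset.sum_mul]
              exact Finset.sum_congr rfl fun i _ => by rw [Finset.sum_mul]
        _ ≤ ∑ i, ∑ j, (a*s+b*t)*(a*t*(A i j)^2 + b*s*(B i j)^2) :=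
              Finset.sum_le_sum fun i _ => Finset.sum_le_sum fun j _ => keyp _ _
        _ = (a*s+b*t) * (a*t*qA + b*s*qB) := by
              simp only [← Finset.mul_sum]
              congr 1
              simp only [Finset.sum_add_distrib, Finset.mul_sum, hqA, hqB]
    have hA2 : (A * A).trace = qA := trq A hA.1
    have hB2 : (B * B).trace = qB := trq B hB.1
    have hC2 : ((a • A + b • B) * (a • A + b • B)).trace = qC := by
      have hsymC : (a • A + b • B).IsSymm := (hA.1.smul a).add (hB.1.smul b)
      rw [trq _ hsymC]
      exact Finset.sum_congr rfl fun i _ => Finset.sum_congr rfl fun j _ => by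
        simp [Matrix.add_apply, Matrix.smul_apply, smul_eq_mul]
    simp only [smul_eq_mul, sigma2, hA2, hB2, hC2, hC, ← hs, ← ht]
    exact final_ineq s t qA qB qC a b hs0 ht0 hst0 hsum
end

section
/- The function F(W) = σ₂(W)/σ₁(W) is concave on the open convex cone Γ₁⁺ = {W symmetric n×n : tr W > 0}. -/
/-!
On symmetric matrices `tr (W²) = tr (Wᵀ W)` is the squared Frobenius norm `Q W`, so
`σ₂(W)/σ₁(W) = tr W / 2 - Q W / (2 tr W)`. The first term is linear, and for any positive
semidefinite quadratic form `Q` and linear form `ℓ` the quotient `Q / ℓ` is convex on `{ℓ > 0}`: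
its convexity defect along a chord is the explicit nonnegative quantity
`a b Q (ℓ y • x - ℓ x • y) / (ℓ x ℓ y ℓ (a • x + b • y))`.
-/

open Matrix

namespace QuadraticForm

variable {R M : Type*} [CommRing R] [AddCommGroup M] [Module R M]

lemma map_smul_add_smul (Q : QuadraticForm R M) (x y : M) (a b : R) :
    Q (a • x + b • y) = a ^ 2 * Q x + a * b * QuadraticMap.polar Q x y + b ^ 2 * Q y := by
  rw [QuadraticMap.map_add ⇑Q, QuadraticMap.map_smul, QuadraticMap.map_smul,
    QuadraticMap.polar_smul_left, QuadraticMap.polar_smul_right, smul_eq_mul, smul_eq_mul,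
    smul_eq_mul, smul_eq_mul]
  ring

variable {E : Type*} [AddCommGroup E] [Module ℝ E] (Q : QuadraticForm ℝ E) (ℓ : E →ₗ[ℝ] ℝ)

lemma mul_div_add_mul_div_sub_div_eq {x y : E} (a b : ℝ) (hx : ℓ x ≠ 0) (hy : ℓ y ≠ 0)
    (hxy : ℓ (a • x + b • y) ≠ 0) :
    a * (Q x / ℓ x) + b * (Q y / ℓ y) - Q (a • x + b • y) / ℓ (a • x + b • y) =
      a * b * Q (ℓ y • x - ℓ x • y) / (ℓ x * ℓ y * ℓ (a • x + b • y)) := by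
  rw [sub_eq_add_neg (ℓ y • x), ← neg_smul, map_smul_add_smul, map_smul_add_smul]
  have hℓ : ℓ (a • x + b • y) = a * ℓ x + b * ℓ y := by simp
  rw [hℓ] at hxy ⊢
  field_simp
  ring

theorem convexOn_div (hQ : ∀ x, 0 ≤ Q x) {s : Set E} (hs : Convex ℝ s)
    (hℓ : ∀ x ∈ s, 0 < ℓ x) : ConvexOn ℝ s fun x => Q x / ℓ x := by
  refine ⟨hs, fun x hx y hy a b ha hb hab => ?_⟩
  have hℓx := hℓ x hx
  have hℓy := hℓ y hy
  have hℓxy : 0 < ℓ (a • x + b • y) := hℓ _ (hs hx hy ha hb hab)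
  have hdefect : 0 ≤ a * b * Q (ℓ y • x - ℓ x • y) / (ℓ x * ℓ y * ℓ (a • x + b • y)) := by
    have := hQ (ℓ y • x - ℓ x • y)
    positivity
  rw [← mul_div_add_mul_div_sub_div_eq Q ℓ a b hℓx.ne' hℓy.ne' hℓxy.ne'] at hdefect
  simp only [smul_eq_mul]
  linarith

end QuadraticForm

namespace Matrix

variable {m n : Type*} [Fintype m] [Fintype n]

noncomputable def frobeniusQuadraticForm : QuadraticForm ℝ (Matrix m n ℝ) :=
  LinearMap.BilinMap.toQuadraticMap <|
    LinearMap.mk₂ ℝ (fun A B : Matrix m n ℝ => (Aᵀ * B).trace)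
      (fun _ _ _ => by rw [transpose_add, Matrix.add_mul, trace_add])
      (fun _ _ _ => by rw [transpose_smul, Matrix.smul_mul, trace_smul])
      (fun _ _ _ => by rw [Matrix.mul_add, trace_add])
      (fun _ _ _ => by rw [Matrix.mul_smul, trace_smul])

@[simp]
lemma frobeniusQuadraticForm_apply (A : Matrix m n ℝ) :
    frobeniusQuadraticForm A = (Aᵀ * A).trace := rfl

lemma frobeniusQuadraticForm_nonneg (A : Matrix m n ℝ) : 0 ≤ frobeniusQuadraticForm A := by
  simpa [conjTranspose_eq_transpose_of_trivial] using
    (posSemidef_conjTranspose_mul_self A).trace_nonneg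

lemma convex_setOf_isSymm_and_trace_pos :
    Convex ℝ {W : Matrix n n ℝ | W.IsSymm ∧ 0 < W.trace} :=
  fun _ hW _ hV a b ha hb hab => ⟨(hW.1.smul a).add (hV.1.smul b), by
    simpa only [trace_add, trace_smul, Set.mem_Ioi] using convex_Ioi (0 : ℝ) hW.2 hV.2 ha hb hab⟩

end Matrix

lemma sigma2_div_trace_eq {n : ℕ} {W : Matrix (Fin n) (Fin n) ℝ} (hW : W.IsSymm)
    (htr : W.trace ≠ 0) :
    sigma2 W / W.trace =
      (1 / 2 : ℝ) • W.trace - (1 / 2 : ℝ) • (frobeniusQuadraticForm W / W.trace) := by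
  rw [frobeniusQuadraticForm_apply, hW.eq, sigma2, smul_eq_mul, smul_eq_mul]
  field_simp

/-- F(W) = σ₂(W)/σ₁(W) is concave on the Gårding cone
Γ₁⁺ = {W symmetric : tr W > 0}. -/
theorem stmt_8 {n : ℕ} :
    ConcaveOn ℝ {W : Matrix (Fin n) (Fin n) ℝ | W.IsSymm ∧ 0 < W.trace}
      (fun W => sigma2 W / W.trace) := by
  have hs := convex_setOf_isSymm_and_trace_pos (n := Fin n)
  have hhalf : (0 : ℝ) ≤ 1 / 2 := by norm_num
  have hlinear := ((traceLinearMap (Fin n) ℝ ℝ).concaveOn hs).smul hhalf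
  have hquot := (frobeniusQuadraticForm.convexOn_div (traceLinearMap (Fin n) ℝ ℝ)
    frobeniusQuadraticForm_nonneg hs fun _ hW => hW.2).smul hhalf
  exact (hlinear.sub hquot).congr fun W hW => (sigma2_div_trace_eq hW.1 hW.2.ne').symm
end

section
/- Let W be a real symmetric n×n matrix with tr W > 0 and let ν > 0. Define F(W) = (σ₂(W) − ν)/σ₁(W). Then the gradient matrix (∂F/∂wᵢⱼ) = (σ₁(W)·T − σ₂(W)·I + ν·I)/σ₁(W)², where T = σ₁(W)·I − W is the first Newton transformation, is positive definite. -/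
open Matrix

/-!
With `t = tr W` and `T = t • 1 - W`, a direct computation gives
`t • T - σ₂(W) • 1 = ½ T² + ½ (tr (W²) • 1 - W²)`.
Both terms are positive semidefinite for symmetric `W`: the first is a square, and the second
because `‖W x‖² ≤ tr (Wᵀ W) ‖x‖²` by Cauchy–Schwarz row by row. Adding `ν • 1` with `ν > 0`
makes the sum positive definite, and the factor `(tr W)⁻²` is positive.
-/

theorem Matrix.dotProduct_mulVec_self_le_trace_transpose_mul_self {m n : Type*} [Fintype m]
    [Fintype n] (A : Matrix m n ℝ) (x : n → ℝ) :
    (A *ᵥ x) ⬝ᵥ (A *ᵥ x) ≤ (Aᵀ * A).trace * (x ⬝ᵥ x) := by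
  have htrace : (Aᵀ * A).trace = ∑ i, ∑ j, A i j ^ 2 := by
    simp only [trace, diag, mul_apply, transpose_apply, sq]
    exact Finset.sum_comm
  rw [htrace, Finset.sum_mul]
  refine Finset.sum_le_sum fun i _ => ?_
  simpa only [mulVec, dotProduct, sq] using
    Finset.sum_mul_sq_le_sq_mul_sq Finset.univ (fun j => A i j) x

theorem Matrix.posSemidef_trace_smul_one_sub_transpose_mul_self {m n : Type*} [Fintype m]
    [Fintype n] [DecidableEq n] (A : Matrix m n ℝ) :
    ((Aᵀ * A).trace • (1 : Matrix n n ℝ) - Aᵀ * A).PosSemidef := by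
  refine .of_dotProduct_mulVec_nonneg ?_ fun x => ?_
  · simp [IsHermitian, conjTranspose_eq_transpose_of_trivial]
  · have h := A.dotProduct_mulVec_self_le_trace_transpose_mul_self x
    simp only [star_trivial, sub_mulVec, smul_mulVec, one_mulVec, dotProduct_sub,
      dotProduct_smul, smul_eq_mul, ← mulVec_mulVec, dotProduct_mulVec x Aᵀ, vecMul_transpose]
    linarith

theorem trace_smul_newton_sub_sigma2_eq {n : ℕ} {W : Matrix (Fin n) (Fin n) ℝ}
    (hW : W.IsSymm) :
    W.trace • (W.trace • (1 : Matrix (Fin n) (Fin n) ℝ) - W) - sigma2 W • 1 =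
      (1 / 2 : ℝ) • ((W.trace • 1 - W)ᵀ * (W.trace • 1 - W)) +
        (1 / 2 : ℝ) • ((Wᵀ * W).trace • 1 - Wᵀ * W) := by
  simp only [hW.eq, transpose_sub, transpose_smul, transpose_one, sigma2, sub_mul, mul_sub,
    Matrix.smul_mul, Matrix.mul_smul, one_mul, mul_one, smul_smul]
  match_scalars <;> ring

theorem posSemidef_trace_smul_newton_sub_sigma2 {n : ℕ} {W : Matrix (Fin n) (Fin n) ℝ}
    (hW : W.IsSymm) :
    (W.trace • (W.trace • (1 : Matrix (Fin n) (Fin n) ℝ) - W) - sigma2 W • 1).PosSemidef := by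
  rw [trace_smul_newton_sub_sigma2_eq hW]
  have hT := posSemidef_conjTranspose_mul_self (W.trace • (1 : Matrix (Fin n) (Fin n) ℝ) - W)
  rw [conjTranspose_eq_transpose_of_trivial] at hT
  exact (hT.smul (by norm_num)).add
    ((posSemidef_trace_smul_one_sub_transpose_mul_self W).smul (by norm_num))

/-- For W symmetric with tr W > 0 and ν > 0, the gradient matrix of
F(W) = (σ₂(W) − ν)/σ₁(W), namely (σ₁(W)·T − σ₂(W)·I + ν·I)/σ₁(W)² with
T = σ₁(W)·I − W the first Newton transformation, is positive definite. -/
theorem stmt_9 {n : ℕ} (W : Matrix (Fin n) (Fin n) ℝ) (hW : W.IsSymm)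
    (htr : 0 < W.trace) (ν : ℝ) (hν : 0 < ν) :
    ((W.trace ^ 2)⁻¹ •
        (W.trace • (W.trace • (1 : Matrix (Fin n) (Fin n) ℝ) - W) -
          sigma2 W • (1 : Matrix (Fin n) (Fin n) ℝ) +
          ν • (1 : Matrix (Fin n) (Fin n) ℝ))).PosDef :=
  (PosDef.posSemidef_add (posSemidef_trace_smul_newton_sub_sigma2 hW) (PosDef.one.smul hν)).smul
    (by positivity)
end
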